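/- Let μ be an infinite cardinal and let I be a type such that: (i) the cofinality of #I is strictly greater than μ, and (ii) for every natural number n and every cardinal β < #I, (ℶ_n(max(μ, β)))⁺ < #I, where ℶ_k denotes the k-fold iterate of the power operation 2^(−) starting from the given base. Suppose that for each n ∈ ℕ, f_n is a function from the (n+1)-element finite subsets of I into a fixed type of colors of cardinality at most μ. Then there exists a sequence of colors (c_n)_{n ∈ ℕ} which is realizable for (f_n)_{n ∈ ℕ}: for every n ∈ ℕ and every cardinal β < #I there exists a subset J ⊆ I with #J ≥ β such that for every k ≤ n, f_k takes the constant value c_k on all (k+1)-element subsets of J. -/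

import Mathlib

open Cardinal

/-- The `k`-fold iterated beth number over a base cardinal `l`:
`ℶ_0(l) = l` and `ℶ_{k+1}(l) = 2 ^ ℶ_k(l)`. -/
def bethIter (l : Cardinal.{u}) : ℕ → Cardinal.{u}
  | 0 => l
  | k + 1 => 2 ^ bethIter l k

/-!
The heart of the proof is the Erdős–Rado theorem `(ℶ_n(κ))⁺ → (κ⁺)^{n+1}_κ`, by induction on
`n`. For the step, let `θ = ℶ_n(κ)` and `#A > 2^θ`. Call the *type* of `a` over `C` the coloring
`s ↦ f (s ∪ {a})` of the finite subsets of `C`. A closure argument of length `θ⁺` gives `B ⊆ A`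
with `#B ≤ 2^θ` that realizes, off `C`, every type over every `C ⊆ B` of size `≤ θ` realized in
`A`. Fixing `a ∈ A \ B`, one picks recursively `b_w ∈ B` (`w < θ⁺`) realizing the type of `a` over
the earlier `b_v`. On a finite set of these `b_w`, `f` does not change when its last point is
replaced by `a`, so the induction hypothesis for `s ↦ f (s ∪ {a})` finishes the step.

For the theorem the colors `c_n` are chosen one at a time. If `c_0, …, c_{n-1}` are realizable,
then for each `β < #I` Erdős–Rado inside a witness of size `(ℶ_n(max μ β))⁺` produces a
homogeneous set of size `> β` for `f_n`, with some color `d_β`. As there are at most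
`μ < cf #I` colors, one of them serves for cofinally many, hence for all, `β < #I`.
-/

open Set Order Function

theorem le_bethIter (κ : Cardinal.{u}) : ∀ n, κ ≤ bethIter κ n
  | 0 => le_rfl
  | n + 1 => (le_bethIter κ n).trans (cantor _).le

namespace WellFoundedLT

variable {W β : Type*} [Preorder W] [WellFoundedLT W]

/-- Well-founded recursion where each value depends only on the set of earlier values. -/
noncomputable def fixImage (step : Set β → β) : W → β :=
  fix fun w ih => step (range fun v : Iio w => ih v v.2)

theorem fixImage_eq (step : Set β → β) (w : W) :
    fixImage step w = step (fixImage step '' Iio w) := by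
  rw [fixImage, fix_eq, image_eq_range]

end WellFoundedLT

namespace Cardinal

theorem mk_finset_le_max (β : Type u) : #(Finset β) ≤ max #β ℵ₀ := by
  rcases finite_or_infinite β with _ | _
  · exact le_max_of_le_right (lt_aleph0_of_finite _).le
  · rw [mk_finset_of_infinite]
    exact le_max_left _ _

theorem mk_finset_arrow_le {β Colors : Type u} {θ : Cardinal.{u}} (hθ : ℵ₀ ≤ θ) (hβ : #β ≤ θ)
    (hC : #Colors ≤ 2 ^ θ) : #(Finset β → Colors) ≤ 2 ^ θ :=
  calc #(Finset β → Colors) = #Colors ^ #(Finset β) := (power_def _ _).symm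
    _ ≤ (2 ^ θ) ^ θ := (power_le_power_right hC).trans
        (power_le_power_left (power_pos θ two_pos).ne' ((mk_finset_le_max β).trans (max_le hβ hθ)))
    _ = 2 ^ θ := by rw [← power_mul, mul_eq_self hθ]

variable {θ : Cardinal.{u}}

theorem mk_Iio_toType_ord_succ_le (w : (succ θ).ord.ToType) : #(Iio w) ≤ θ :=
  lt_succ_iff.mp (by simpa using mk_Iio_lt w (by simp))

theorem exists_gt_of_mk_le_toType_ord_succ (hθ : ℵ₀ ≤ θ) {S : Set (succ θ).ord.ToType}
    (hS : #S ≤ θ) : ∃ w, ∀ v ∈ S, v < w := by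
  have hcof : Order.cof (succ θ).ord.ToType = succ θ := by
    rw [Ordinal.cof_toType, (isRegular_succ hθ).cof_ord]
  have hS : ¬IsCofinal S := fun h => (cof_le h).not_gt (by rw [hcof]; exact lt_succ_iff.mpr hS)
  simpa [IsCofinal] using hS

end Cardinal

section Homogeneous

variable {α Colors : Type u}

def IsHomogeneous (f : Finset α → Colors) (n : ℕ) (H : Set α) : Prop :=
  ∃ c, ∀ s : Finset α, ↑s ⊆ H → s.card = n → f s = c

theorem exists_isHomogeneous_one {κ : Cardinal.{u}} (hκ : ℵ₀ ≤ κ) (hC : #Colors ≤ κ)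
    (f : Finset α → Colors) {A : Set α} (hA : succ κ ≤ #A) :
    ∃ H ⊆ A, κ < #H ∧ IsHomogeneous f 1 H := by
  obtain ⟨c, H, hHA, hH, hc⟩ := infinite_pigeonhole_set (fun x : A => f {x.1}) (succ κ) hA
    (hκ.trans (le_succ κ)) (by rw [(isRegular_succ hκ).cof_ord]; exact lt_succ_iff.mpr hC)
  refine ⟨H, hHA, succ_le_iff.mp hH, c, fun s hs hcard => ?_⟩
  obtain ⟨x, rfl⟩ := Finset.card_eq_one.mp hcard
  exact hc (hs (Finset.mem_singleton_self x))

theorem exists_erase_subset_image_Iio [DecidableEq α] {W : Type*} [LinearOrder W] {e : W → α}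
    {s : Finset α} (hs : ↑s ⊆ range e) (hne : s.Nonempty) :
    ∃ w, e w ∈ s ∧ ↑(s.erase (e w)) ⊆ e '' Iio w := by
  have : Nonempty W := ⟨(hs hne.choose_spec).choose⟩
  choose! g hg using fun x (hx : x ∈ s) => hs hx
  obtain ⟨x, hx, hmax⟩ := s.exists_max_image g hne
  refine ⟨g x, by rwa [hg x hx], fun y hy => ?_⟩
  obtain ⟨hyx, hy⟩ := Finset.mem_erase.mp hy
  refine ⟨g y, lt_of_le_of_ne (hmax y hy) fun h => hyx ?_, hg y hy⟩
  rw [← hg y hy, h, hg x hx]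

theorem IsHomogeneous.of_insert [DecidableEq α] {f : Finset α → Colors} {W : Type*}
    [LinearOrder W] {e : W → α} {a : α}
    (hend : ∀ w, ∀ s : Finset α, ↑s ⊆ e '' Iio w → f (insert (e w) s) = f (insert a s))
    {n : ℕ} {H : Set α} (hHe : H ⊆ range e)
    (hH : IsHomogeneous (fun s => f (insert a s)) (n + 1) H) :
    IsHomogeneous f (n + 2) H := by
  obtain ⟨c, hc⟩ := hH
  refine ⟨c, fun s hsH hcard => ?_⟩
  obtain ⟨w, hws, hsub⟩ :=
    exists_erase_subset_image_Iio (hsH.trans hHe) (Finset.card_pos.mp (by omega))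
  calc f s = f (insert (e w) (s.erase (e w))) := by rw [Finset.insert_erase hws]
    _ = f (insert a (s.erase (e w))) := hend w _ hsub
    _ = c := hc _ ((Finset.coe_subset.mpr (Finset.erase_subset _ _)).trans hsH)
        (by rw [Finset.card_erase_of_mem hws, hcard]; rfl)

end Homogeneous

section Saturation

variable {α Colors : Type u} [DecidableEq α] (f : Finset α → Colors)

def typeOver (C : Set α) (a : α) : Finset C → Colors :=
  fun s => f (insert a (s.map (Embedding.subtype _)))

theorem apply_insert_eq_of_typeOver_eq {C : Set α} {a b : α}
    (h : typeOver f C b = typeOver f C a) {s : Finset α} (hs : ↑s ⊆ C) :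
    f (insert b s) = f (insert a s) := by
  classical
  simpa [typeOver, Finset.subtype_map_of_mem hs] using congrFun h (s.subtype (· ∈ C))

def IsSaturated (A B : Set α) (θ : Cardinal.{u}) : Prop :=
  ∀ C ⊆ B, #C ≤ θ → ∀ a ∈ A \ C, ∃ b ∈ B \ C, typeOver f C b = typeOver f C a

variable (A : Set α)

/-- One realization in `A \ C` of each type over `C` that is realized there. -/
def typeReps (C : Set α) : Set α :=
  (exists_subset_bijOn (A \ C) (typeOver f C)).choose

theorem typeReps_subset (C : Set α) : typeReps f A C ⊆ A \ C :=
  (exists_subset_bijOn _ _).choose_spec.1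

theorem exists_mem_typeReps {C : Set α} {a : α} (ha : a ∈ A \ C) :
    ∃ b ∈ typeReps f A C, typeOver f C b = typeOver f C a :=
  (exists_subset_bijOn _ _).choose_spec.2.surjOn (mem_image_of_mem _ ha)

theorem mk_typeReps_le (C : Set α) : #(typeReps f A C) ≤ #(Finset C → Colors) := by
  calc #(typeReps f A C) = #(typeOver f C '' typeReps f A C) :=
        (mk_image_eq_of_injOn _ _ (exists_subset_bijOn _ _).choose_spec.2.injOn).symm
    _ ≤ #(Finset C → Colors) := mk_set_le _

variable (θ : Cardinal.{u})

def saturationStep (D : Set α) : Set α :=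
  D ∪ ⋃ C : {C : Set α // C ⊆ D ∧ #C ≤ θ}, typeReps f A C

theorem saturationStep_subset_union (D : Set α) : saturationStep f A θ D ⊆ D ∪ A :=
  union_subset_union_right D (iUnion_subset fun C => (typeReps_subset f A C).trans sdiff_subset)

theorem mk_saturationStep_le (hθ : ℵ₀ ≤ θ) (hC : #Colors ≤ 2 ^ θ)
    {D : Set α} (hD : #D ≤ 2 ^ θ) :
    #(saturationStep f A θ D) ≤ 2 ^ θ := by
  have h2θ : ℵ₀ ≤ 2 ^ θ := hθ.trans (cantor θ).le
  have hsmall : #{C : Set α // C ⊆ D ∧ #C ≤ θ} ≤ 2 ^ θ :=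
    calc _ ≤ max #D ℵ₀ ^ θ := mk_bounded_subset_le D θ
      _ ≤ (2 ^ θ) ^ θ := power_le_power_right (max_le hD h2θ)
      _ = 2 ^ θ := by rw [← power_mul, mul_eq_self hθ]
  have hreps (C : {C : Set α // C ⊆ D ∧ #C ≤ θ}) : #(typeReps f A C) ≤ 2 ^ θ :=
    (mk_typeReps_le f A C).trans (mk_finset_arrow_le hθ C.2.2 hC)
  calc _ ≤ #D + #{C : Set α // C ⊆ D ∧ #C ≤ θ} * ⨆ C : {C : Set α // C ⊆ D ∧ #C ≤ θ},
          #(typeReps f A C) := (mk_union_le _ _).trans (add_le_add le_rfl (mk_iUnion_le _))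
    _ ≤ 2 ^ θ + 2 ^ θ * 2 ^ θ := add_le_add hD (mul_le_mul' hsmall (ciSup_le' hreps))
    _ = 2 ^ θ := by rw [mul_eq_self h2θ, add_eq_self h2θ]

noncomputable def saturationChain : (succ θ).ord.ToType → Set α :=
  WellFoundedLT.fixImage fun P => saturationStep f A θ (⋃₀ P)

theorem saturationChain_eq (w : (succ θ).ord.ToType) :
    saturationChain f A θ w = saturationStep f A θ (⋃ v ∈ Iio w, saturationChain f A θ v) := by
  rw [saturationChain, WellFoundedLT.fixImage_eq, sUnion_image]

theorem saturationChain_subset (w : (succ θ).ord.ToType) : saturationChain f A θ w ⊆ A := by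
  induction w using WellFoundedLT.induction with
  | _ w ih =>
    rw [saturationChain_eq]
    exact (saturationStep_subset_union f A θ _).trans (union_subset (iUnion₂_subset ih) subset_rfl)

theorem mk_saturationChain_le (hθ : ℵ₀ ≤ θ) (hC : #Colors ≤ 2 ^ θ) (w : (succ θ).ord.ToType) :
    #(saturationChain f A θ w) ≤ 2 ^ θ := by
  induction w using WellFoundedLT.induction with
  | _ w ih =>
    rw [saturationChain_eq]
    refine mk_saturationStep_le f A θ hθ hC ?_
    calc _ ≤ #(Iio w) * ⨆ v : Iio w, #(saturationChain f A θ v) := mk_biUnion_le _ _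
      _ ≤ 2 ^ θ * 2 ^ θ := mul_le_mul' ((mk_Iio_toType_ord_succ_le w).trans (cantor θ).le)
          (ciSup_le' fun v => ih v v.2)
      _ = 2 ^ θ := mul_eq_self (hθ.trans (cantor θ).le)

/-- Saturation holds because `θ⁺` is regular: a set of size `≤ θ` in the union is already
contained in an earlier stage of the chain. -/
theorem isSaturated_iUnion_saturationChain (hθ : ℵ₀ ≤ θ) :
    IsSaturated f A (⋃ w, saturationChain f A θ w) θ := by
  intro C hCB hCθ a ha
  choose stage hstage using fun c : C => mem_iUnion.mp (hCB c.2)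
  obtain ⟨w, hw⟩ := exists_gt_of_mk_le_toType_ord_succ hθ (mk_range_le.trans hCθ)
  have hCw : C ⊆ ⋃ v ∈ Iio w, saturationChain f A θ v := fun c hc =>
    mem_biUnion (hw _ (mem_range_self ⟨c, hc⟩)) (hstage ⟨c, hc⟩)
  obtain ⟨b, hb, hba⟩ := exists_mem_typeReps f A ha
  have hbw : b ∈ saturationChain f A θ w := by
    rw [saturationChain_eq]
    exact Or.inr (mem_iUnion.mpr ⟨⟨C, hCw, hCθ⟩, hb⟩)
  exact ⟨b, ⟨mem_iUnion.mpr ⟨w, hbw⟩, (typeReps_subset f A C hb).2⟩, hba⟩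

theorem exists_isSaturated (hθ : ℵ₀ ≤ θ) (hC : #Colors ≤ 2 ^ θ) :
    ∃ B ⊆ A, #B ≤ 2 ^ θ ∧ IsSaturated f A B θ := by
  refine ⟨_, iUnion_subset (saturationChain_subset f A θ), ?_,
    isSaturated_iUnion_saturationChain f A θ hθ⟩
  calc _ ≤ #(succ θ).ord.ToType * ⨆ w, #(saturationChain f A θ w) := mk_iUnion_le _
    _ ≤ 2 ^ θ * 2 ^ θ := mul_le_mul' (by rw [mk_ord_toType]; exact succ_le_of_lt (cantor θ))
        (ciSup_le' (mk_saturationChain_le f A θ hθ hC))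
    _ = 2 ^ θ := mul_eq_self (hθ.trans (cantor θ).le)

end Saturation

section EndHomogeneous

variable {α Colors : Type u} [DecidableEq α] (f : Finset α → Colors) (θ : Cardinal.{u})
  (B : Set α) (a : α)

noncomputable def endHomogeneousSeq : (succ θ).ord.ToType → α :=
  WellFoundedLT.fixImage fun P =>
    @Classical.epsilon α ⟨a⟩ fun b => b ∈ B \ P ∧ typeOver f P b = typeOver f P a

variable {f θ B a}

theorem endHomogeneousSeq_spec {A : Set α} (hB : IsSaturated f A B θ) (ha : a ∈ A \ B)
    (w : (succ θ).ord.ToType) :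
    endHomogeneousSeq f θ B a w ∈ B \ endHomogeneousSeq f θ B a '' Iio w ∧
      typeOver f (endHomogeneousSeq f θ B a '' Iio w) (endHomogeneousSeq f θ B a w) =
        typeOver f (endHomogeneousSeq f θ B a '' Iio w) a := by
  induction w using WellFoundedLT.induction with
  | _ w ih =>
    set P := endHomogeneousSeq f θ B a '' Iio w
    have hPB : P ⊆ B := image_subset_iff.mpr fun v hv => (ih v hv).1.1
    have hex : ∃ b, b ∈ B \ P ∧ typeOver f P b = typeOver f P a :=
      hB P hPB (mk_image_le.trans (mk_Iio_toType_ord_succ_le w)) a ⟨ha.1, fun h => ha.2 (hPB h)⟩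
    rw [show endHomogeneousSeq f θ B a w = _ from WellFoundedLT.fixImage_eq _ w]
    exact Classical.epsilon_spec hex

theorem endHomogeneousSeq_injective {A : Set α} (hB : IsSaturated f A B θ) (ha : a ∈ A \ B) :
    Injective (endHomogeneousSeq f θ B a) :=
  Injective.of_lt_imp_ne fun v w hvw h => (endHomogeneousSeq_spec hB ha w).1.2 ⟨v, hvw, h⟩

end EndHomogeneous

theorem erdos_rado {κ : Cardinal.{u}} (hκ : ℵ₀ ≤ κ) {α Colors : Type u} (hC : #Colors ≤ κ)
    (f : Finset α → Colors) (n : ℕ) {A : Set α} (hA : succ (bethIter κ n) ≤ #A) :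
    ∃ H ⊆ A, κ < #H ∧ IsHomogeneous f (n + 1) H := by
  classical
  induction n generalizing f A with
  | zero => exact exists_isHomogeneous_one hκ hC f hA
  | succ n ih =>
    set θ := bethIter κ n
    have hθ : ℵ₀ ≤ θ := hκ.trans (le_bethIter κ n)
    obtain ⟨B, hBA, hBθ, hB⟩ :=
      exists_isSaturated f A θ hθ (hC.trans ((le_bethIter κ n).trans (cantor θ).le))
    obtain ⟨a, ha⟩ : (A \ B).Nonempty := sdiff_nonempty.mpr fun hAB =>
      ((mk_le_mk_of_subset hAB).trans hBθ).not_gt (succ_le_iff.mp hA)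
    have hspec := endHomogeneousSeq_spec hB ha
    obtain ⟨H, hHe, hκH, hH⟩ := ih (fun s => f (insert a s))
      (A := range (endHomogeneousSeq f θ B a))
      (by rw [mk_range_eq _ (endHomogeneousSeq_injective hB ha), mk_ord_toType])
    refine ⟨H, hHe.trans ((range_subset_iff.mpr fun w => (hspec w).1.1).trans hBA), hκH, ?_⟩
    exact hH.of_insert (fun w s hs => apply_insert_eq_of_typeOver_eq f (hspec w).2 hs) hHe

theorem exists_forall_of_exists_update {γ : Type*} (P : ℕ → (ℕ → γ) → Prop)
    (hP : ∀ n c c', (∀ k < n, c k = c' k) → P n c → P n c') {c₀ : ℕ → γ} (h₀ : P 0 c₀)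
    (hstep : ∀ n c, P n c → ∃ d, P (n + 1) (update c n d)) : ∃ c, ∀ n, P n c := by
  choose g hg using hstep
  let F (n : ℕ) : {c // P n c} :=
    Nat.rec ⟨c₀, h₀⟩ (fun n p => ⟨update p.1 n (g n p.1 p.2), hg n p.1 p.2⟩) n
  have hagree : ∀ m, ∀ k < m, (F m).1 k = (F (k + 1)).1 k := by
    intro m
    induction m with
    | zero => intro k hk; omega
    | succ m ih =>
      intro k hk
      rcases Nat.lt_succ_iff_lt_or_eq.mp hk with hk | rfl
      · exact (update_of_ne hk.ne _ _).trans (ih k hk)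
      · rfl
  exact ⟨fun k => (F (k + 1)).1 k, fun n => hP n _ _ (hagree n) (F n).2⟩

theorem Cardinal.exists_forall_lt_of_mk_lt_cof {ι : Type u} {κ : Cardinal.{u}}
    (hι : #ι < κ.ord.cof) {P : ι → Cardinal.{u} → Prop}
    (hP : ∀ i ⦃β β'⦄, β' ≤ β → P i β → P i β') (h : ∀ β < κ, ∃ i, P i β) :
    ∃ i, ∀ β < κ, P i β := by
  by_contra! hfail
  choose b hbκ hb using hfail
  obtain ⟨i, hi⟩ := h _ (iSup_lt_of_lt_cof_ord hι hbκ)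
  exact hb i (hP i (le_ciSup (bddAbove_of_small (s := range b)) i) hi)

section Realizable

variable {I Colors : Type u} (f : ∀ n : ℕ, {s : Finset I // s.card = n + 1} → Colors)

def IsRealizableAt (n : ℕ) (c : ℕ → Colors) (β : Cardinal.{u}) : Prop :=
  ∃ J : Set I, β ≤ #J ∧ ∀ k < n, ∀ s : {s : Finset I // s.card = k + 1}, ↑s.1 ⊆ J → f k s = c k

variable {f}

theorem IsRealizableAt.congr {n : ℕ} {c c' : ℕ → Colors} (hcc' : ∀ k < n, c k = c' k)
    {β : Cardinal.{u}} (h : IsRealizableAt f n c β) : IsRealizableAt f n c' β :=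
  let ⟨J, hJ, hJc⟩ := h
  ⟨J, hJ, fun k hk s hs => (hJc k hk s hs).trans (hcc' k hk)⟩

theorem IsRealizableAt.mono {n : ℕ} {c : ℕ → Colors} {β β' : Cardinal.{u}} (hβ : β' ≤ β)
    (h : IsRealizableAt f n c β) : IsRealizableAt f n c β' :=
  let ⟨J, hJ, hJc⟩ := h
  ⟨J, hβ.trans hJ, hJc⟩

theorem exists_forall_isRealizableAt_update {μ : Cardinal.{u}} (hμ : ℵ₀ ≤ μ)
    (hcf : μ < (#I).ord.cof)
    (hbeth : ∀ (n : ℕ) (β : Cardinal.{u}), β < #I → succ (bethIter (max μ β) n) < #I)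
    (hC : #Colors ≤ μ) {n : ℕ} {c : ℕ → Colors} (hc : ∀ β < #I, IsRealizableAt f n c β) :
    ∃ d, ∀ β < #I, IsRealizableAt f (n + 1) (update c n d) β := by
  refine exists_forall_lt_of_mk_lt_cof (hC.trans_lt hcf) (fun d _ _ => IsRealizableAt.mono)
    fun β hβ => ?_
  obtain ⟨J, hJ, hJc⟩ := hc _ (hbeth n β hβ)
  let g (s : Finset I) : Colors := if h : s.card = n + 1 then f n ⟨s, h⟩ else c n
  obtain ⟨H, hHJ, hH, d, hd⟩ :=
    erdos_rado (hμ.trans (le_max_left μ β)) (hC.trans (le_max_left μ β)) g n hJ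
  refine ⟨d, H, (le_max_right μ β).trans hH.le, fun k hk s hs => ?_⟩
  rcases Nat.lt_succ_iff_lt_or_eq.mp hk with hk | rfl
  · rw [update_of_ne hk.ne]
    exact hJc k hk s (hs.trans hHJ)
  · rw [update_self]
    simpa [g, s.2] using hd s.1 hs s.2

end Realizable

/-- If `μ` is infinite, `cf(#I) > μ`, and for every `n` and every `β < #I` one
has `(ℶ_n(max μ β))⁺ < #I`, then any sequence of colorings `f n` of the
`(n+1)`-element subsets of `I` with at most `μ` colors admits a realizable
sequence of colors `(c n)`: for every `n` and every `β < #I` there is `J ⊆ I`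
with `#J ≥ β` on whose `(k+1)`-element subsets `f k` is constant with value
`c k`, for all `k ≤ n`. -/
theorem exists_realizable_sequence (μ : Cardinal.{u}) (hμ : ℵ₀ ≤ μ)
    (I : Type u) (hcf : μ < (#I).ord.cof)
    (hbeth : ∀ (n : ℕ) (β : Cardinal.{u}), β < #I →
      Order.succ (bethIter (max μ β) n) < #I)
    (Colors : Type u) (hC : #Colors ≤ μ)
    (f : ∀ n : ℕ, {s : Finset I // s.card = n + 1} → Colors) :
    ∃ c : ℕ → Colors, ∀ n : ℕ, ∀ β : Cardinal.{u}, β < #I →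
      ∃ J : Set I, β ≤ #J ∧
        ∀ k ≤ n, ∀ s : {s : Finset I // s.card = k + 1},
          ↑s.1 ⊆ J → f k s = c k := by
  obtain ⟨i⟩ : Nonempty I := by
    rw [← mk_ne_zero_iff]
    intro hI
    rw [hI, ord_zero, Ordinal.cof_zero] at hcf
    exact hcf.not_ge zero_le
  obtain ⟨c, hc⟩ := exists_forall_of_exists_update (fun n c => ∀ β < #I, IsRealizableAt f n c β)
    (fun n c c' hcc' h β hβ => (h β hβ).congr hcc')
    (c₀ := fun _ => f 0 ⟨{i}, Finset.card_singleton i⟩)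
    (fun β hβ => ⟨univ, by rw [mk_univ]; exact hβ.le, fun k hk => absurd hk k.not_lt_zero⟩)
    fun n c hc => exists_forall_isRealizableAt_update hμ hcf hbeth hC hc
  refine ⟨c, fun n β hβ => ?_⟩
  obtain ⟨J, hJ, hJc⟩ := hc (n + 1) β hβ
  exact ⟨J, hJ, fun k hk => hJc k (Nat.lt_succ_of_le hk)⟩
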